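/- arXiv:1205.6066 — 4 statements merged into one kernel-verified Lean document; each statement's English description precedes it below -/
import Mathlib

section
/- For every object B of 𝒞, the map ψ_B : Hom_𝒞(A⟨M,α⟩, B) → h_{A,α}(B) sending a morphism κ to the pair (j̄ ≫ κ, θ · U κ) is a bijection; that is, the object A⟨M,α⟩ together with the element (j̄, θ) ∈ h_{A,α}(A⟨M,α⟩) represents the functor h_{A,α} : 𝒞 → Set. -/
/-!
By the pushout property and the adjunction `F ⊣ U`, a morphism `A⟨M,α⟩ ⟶ B` is the same as a
pair `(f, ψ)` of a morphism `f : A ⟶ B` and a chain map `ψ : C(α) ⟶ U B` with `ī ≫ ψ = U f`.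
A chain map out of the mapping cone `C(α)` is in turn the same as its restriction `U f` to the
second summand together with its restriction to `M[1]`, a degree `-1` map `t` with
`δ t = α ≫ U f`; under these identifications `t` is `θ · U κ`.
-/

open CategoryTheory CategoryTheory.Limits CochainComplex CochainComplex.HomComplex

noncomputable section

universe u

/-- The category `dg^S` of `S`-indexed families of cochain complexes of `k`-modules. -/
abbrev DGS (k : Type u) [CommRing k] (S : Type u) : Type _ :=
  S → CochainComplex (ModuleCat.{u} k) ℤ

variable {k : Type u} [CommRing k] {S : Type u}

namespace DGS

/-- The componentwise mapping cone of a morphism of `DGS k S`. -/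
def coneFun {M N : DGS k S} (α : M ⟶ N) : DGS k S :=
  fun x => CochainComplex.mappingCone (α x)

/-- The inclusion of the second summand into the componentwise mapping cone. -/
def coneInr {M N : DGS k S} (α : M ⟶ N) : N ⟶ coneFun α :=
  fun x => CochainComplex.mappingCone.inr (α x)

/-- Componentwise shift. -/
def shift (M : DGS k S) (a : ℤ) : DGS k S := fun x => (M x)⟦a⟧

/-- The componentwise mapping cone of the identity. -/
def coneId (N : DGS k S) : DGS k S := coneFun (𝟙 N)

/-- The inclusion of the second summand in the cone of the identity. -/
def coneIdInr (N : DGS k S) : N ⟶ coneId N := coneInr (𝟙 N)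

/-- `M : DGS k S` consists of free modules with zero differential. -/
def IsFree (M : DGS k S) : Prop :=
  (∀ (x : S) (n m : ℤ), (M x).d n m = 0) ∧ ∀ (x : S) (n : ℤ), Module.Free k ((M x).X n)

/-- A family `t` of degree `-1` maps `M ⟶ B` satisfies `t d + d t = β` (componentwise). -/
def IsNullHomotopy {M B : DGS k S} (β : M ⟶ B)
    (t : ∀ x : S, Cochain (M x) (B x) (-1)) : Prop :=
  ∀ x : S, δ (-1) 0 (t x) = Cochain.ofHom (β x)

end DGS

variable {𝒞 : Type (u + 1)} [Category.{u} 𝒞] [HasLimits 𝒞] [HasColimits 𝒞]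
  (F : DGS k S ⥤ 𝒞) (U : 𝒞 ⥤ DGS k S) (adj : F ⊣ U)

/-- The degree `-1` family of maps `θ : M → U(A⟨M,α⟩)`. -/
def theta {M : DGS k S} {A : 𝒞} (α : M ⟶ U.obj A) {D : 𝒞}
    (g : F.obj (DGS.coneFun α) ⟶ D) (x : S) : Cochain (M x) ((U.obj D) x) (-1) :=
  (mappingCone.inl (α x)).comp
    (Cochain.ofHom ((adj.unit.app (DGS.coneFun α) ≫ U.map g) x)) (add_zero (-1))

/-- The complex `k` concentrated in degree `0`. -/
def unitComplex (k : Type u) [CommRing k] : CochainComplex (ModuleCat.{u} k) ℤ :=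
  (HomologicalComplex.single (ModuleCat.{u} k) (ComplexShape.up ℤ) 0).obj (ModuleCat.of k k)

/-- The object `K_x` of `DGS k S`: the cone of the identity of `k` in the component `x`,
and `0` elsewhere. -/
def Kx [DecidableEq S] (x : S) : DGS k S :=
  fun y => if y = x then CochainComplex.mappingCone (𝟙 (unitComplex k))
    else (HomologicalComplex.single (ModuleCat.{u} k) (ComplexShape.up ℤ) 0).obj
      (ModuleCat.of k PUnit)

/-- `f` is a weak equivalence: `U f` is a componentwise quasi-isomorphism. -/
def IsWeakEq {X Y : 𝒞} (f : X ⟶ Y) : Prop :=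
  ∀ x : S, QuasiIso ((U.map f) x)

/-- `f` is a fibration: `U f` is surjective in every degree, in every component. -/
def IsFib {X Y : 𝒞} (f : X ⟶ Y) : Prop :=
  ∀ (x : S) (n : ℤ), Function.Surjective (((U.map f) x).f n)

/-- `f` is a cofibration: it has the left lifting property with respect to all
trivial fibrations. -/
def IsCof {X Y : 𝒞} (f : X ⟶ Y) : Prop :=
  ∀ ⦃P Q : 𝒞⦄ (y : P ⟶ Q), IsFib U y → IsWeakEq U y → HasLiftingProperty f y

namespace CategoryTheory.Adjunction

variable {C₀ D₀ : Type*} [Category C₀] [Category D₀] {L : C₀ ⥤ D₀} {R : D₀ ⥤ C₀}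

lemma homEquiv_counit_comp (h : L ⊣ R) {A B : D₀} (j : A ⟶ B) :
    h.homEquiv (R.obj A) B (h.counit.app A ≫ j) = R.map j := by
  simp [homEquiv_unit]

lemma comp_homEquiv_of_comm (h : L ⊣ R) {X : C₀} {A B : D₀} {i : R.obj A ⟶ X} {j : A ⟶ B}
    {g : L.obj X ⟶ B} (w : h.counit.app A ≫ j = L.map i ≫ g) :
    i ≫ h.homEquiv X B g = R.map j := by
  rw [← homEquiv_naturality_left, ← w, homEquiv_counit_comp]

end CategoryTheory.Adjunction

namespace CochainComplex.mappingCone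

variable {C : Type*} [Category C] [Preadditive C] {K L X : CochainComplex C ℤ} (φ : K ⟶ L)
  [HomologicalComplex.HasHomotopyCofiber φ]

lemma δ_inl_comp_ofHom (ψ : mappingCone φ ⟶ X) :
    δ (-1) 0 ((inl φ).comp (Cochain.ofHom ψ) (add_zero (-1))) =
      Cochain.ofHom (φ ≫ inr φ ≫ ψ) := by
  rw [δ_comp_ofHom, δ_inl, ← Cochain.ofHom_comp, Category.assoc]

lemma hom_ext_of_inl_comp_of_inr_comp {ψ₁ ψ₂ : mappingCone φ ⟶ X}
    (hinl : (inl φ).comp (Cochain.ofHom ψ₁) (add_zero (-1)) =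
      (inl φ).comp (Cochain.ofHom ψ₂) (add_zero (-1)))
    (hinr : inr φ ≫ ψ₁ = inr φ ≫ ψ₂) : ψ₁ = ψ₂ := by
  apply Cochain.ofHom_injective
  rw [ext_cochain_from_iff φ (-1) 0 (neg_add_cancel 1)]
  refine ⟨hinl, ?_⟩
  rw [← Cochain.ofHom_comp, ← Cochain.ofHom_comp, hinr]

end CochainComplex.mappingCone

section

variable {𝒞 : Type (u + 1)} [Category.{u} 𝒞] {F : DGS k S ⥤ 𝒞} {U : 𝒞 ⥤ DGS k S} {adj : F ⊣ U}
  {M : DGS k S} {A : 𝒞} {α : M ⟶ U.obj A} {D : 𝒞} {jbar : A ⟶ D}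
  {g : F.obj (DGS.coneFun α) ⟶ D}

lemma theta_comp_ofHom {B : 𝒞} (κ : D ⟶ B) (x : S) :
    (theta F U adj α g x).comp (Cochain.ofHom ((U.map κ) x)) (add_zero (-1)) =
      (mappingCone.inl (α x)).comp (Cochain.ofHom (adj.homEquiv _ _ (g ≫ κ) x))
        (add_zero (-1)) := by
  rw [theta, Cochain.comp_assoc_of_third_is_zero_cochain, adj.homEquiv_unit, U.map_comp]
  exact congrArg ((mappingCone.inl (α x)).comp · (add_zero (-1))) (Cochain.ofHom_comp _ _).symm

lemma coneInr_comp_homEquiv (hw : adj.counit.app A ≫ jbar = F.map (DGS.coneInr α) ≫ g)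
    {B : 𝒞} (κ : D ⟶ B) :
    DGS.coneInr α ≫ adj.homEquiv _ _ (g ≫ κ) = U.map (jbar ≫ κ) :=
  adj.comp_homEquiv_of_comm (by rw [reassoc_of% hw])

lemma isNullHomotopy_theta_comp (hw : adj.counit.app A ≫ jbar = F.map (DGS.coneInr α) ≫ g)
    {B : 𝒞} (κ : D ⟶ B) :
    DGS.IsNullHomotopy (α ≫ U.map (jbar ≫ κ))
      (fun x => (theta F U adj α g x).comp (Cochain.ofHom ((U.map κ) x)) (add_zero (-1))) := by
  intro x
  beta_reduce
  rw [theta_comp_ofHom]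
  exact (mappingCone.δ_inl_comp_ofHom _ _).trans
    (congrArg (fun h => Cochain.ofHom (α x ≫ h)) (congr_fun (coneInr_comp_homEquiv hw κ) x))

lemma theta_comp_injective (hpo : IsPushout (adj.counit.app A) (F.map (DGS.coneInr α)) jbar g)
    {B : 𝒞} :
    Function.Injective (fun κ : D ⟶ B =>
      ((jbar ≫ κ,
        fun x => (theta F U adj α g x).comp (Cochain.ofHom ((U.map κ) x)) (add_zero (-1))) :
        (A ⟶ B) × (∀ x : S, Cochain (M x) ((U.obj B) x) (-1)))) := by
  intro κ₁ κ₂ h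
  obtain ⟨hj, hθ⟩ := Prod.mk.inj h
  have hinr := coneInr_comp_homEquiv hpo.w κ₁
  rw [hj, ← coneInr_comp_homEquiv hpo.w κ₂] at hinr
  refine hpo.hom_ext hj ((adj.homEquiv _ _).injective (funext fun x => ?_))
  refine mappingCone.hom_ext_of_inl_comp_of_inr_comp (α x) ?_ (congr_fun hinr x)
  simpa only [theta_comp_ofHom] using congr_fun hθ x

lemma exists_theta_comp_eq (hpo : IsPushout (adj.counit.app A) (F.map (DGS.coneInr α)) jbar g)
    {B : 𝒞} {f : A ⟶ B} {t : ∀ x : S, Cochain (M x) ((U.obj B) x) (-1)}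
    (ht : DGS.IsNullHomotopy (α ≫ U.map f) t) :
    ∃ κ : D ⟶ B, jbar ≫ κ = f ∧
      (fun x => (theta F U adj α g x).comp (Cochain.ofHom ((U.map κ) x)) (add_zero (-1))) = t := by
  let ψ : DGS.coneFun α ⟶ U.obj B := fun x => mappingCone.desc (α x) (t x) ((U.map f) x) (ht x)
  have hinr : DGS.coneInr α ≫ ψ = U.map f := funext fun x => mappingCone.inr_desc _ _ _ _
  have hw : adj.counit.app A ≫ f = F.map (DGS.coneInr α) ≫ (adj.homEquiv _ _).symm ψ := by
    apply (adj.homEquiv _ _).injective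
    rw [adj.homEquiv_counit_comp, adj.homEquiv_naturality_left, Equiv.apply_symm_apply, hinr]
  refine ⟨hpo.desc f _ hw, hpo.inl_desc f _ hw, funext fun x => ?_⟩
  rw [theta_comp_ofHom, hpo.inr_desc, Equiv.apply_symm_apply]
  exact mappingCone.inl_desc _ _ _ _

end

section
variable {M : DGS k S} {A : 𝒞} (α : M ⟶ U.obj A) {D : 𝒞} (jbar : A ⟶ D)
  (g : F.obj (DGS.coneFun α) ⟶ D)

/-- Lemma 1: the object `D = A⟨M,α⟩` (defined by the pushout square) together with the
element `(j̄, θ)` represents the functor `h_{A,α}`: for every `B`, the map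
`ψ_B : 𝒞(D, B) → h_{A,α}(B)`, `κ ↦ (j̄ ≫ κ, θ · U κ)`, is well defined and bijective. -/
theorem AMalpha_represents
    (hpo : IsPushout (adj.counit.app A) (F.map (DGS.coneInr α)) jbar g) (B : 𝒞) :
    (∀ κ : D ⟶ B,
      DGS.IsNullHomotopy (α ≫ U.map (jbar ≫ κ))
        (fun x => (theta F U adj α g x).comp
          (Cochain.ofHom ((U.map κ) x)) (add_zero (-1)))) ∧
    Function.Injective (fun κ : D ⟶ B =>
      ((jbar ≫ κ,
        fun x => (theta F U adj α g x).comp (Cochain.ofHom ((U.map κ) x)) (add_zero (-1))) :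
        (A ⟶ B) × (∀ x : S, Cochain (M x) ((U.obj B) x) (-1)))) ∧
    (∀ (f : A ⟶ B) (t : ∀ x : S, Cochain (M x) ((U.obj B) x) (-1)),
      DGS.IsNullHomotopy (α ≫ U.map f) t →
      ∃ κ : D ⟶ B, jbar ≫ κ = f ∧
        (fun x => (theta F U adj α g x).comp (Cochain.ofHom ((U.map κ) x)) (add_zero (-1)))
          = t) := by
  exact ⟨fun κ => isNullHomotopy_theta_comp hpo.w κ, theta_comp_injective hpo,
    fun _ _ ht => exists_theta_comp_eq hpo ht⟩

end
end
end

section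
/- The chain map α ≫ U j̄ : M ⟶ U(A⟨M,α⟩) is null-homotopic: it equals the boundary θ d + d θ of the degree −1 map θ. In particular, if the differential of M is zero, then for every element m of M the cycle α(m) is sent by U j̄ to the boundary of the element θ(m) of U(A⟨M,α⟩). -/
open CategoryTheory CategoryTheory.Limits CochainComplex CochainComplex.HomComplex

noncomputable section

universe u

variable {k : Type u} [CommRing k] {S : Type u}

variable {𝒞 : Type (u + 1)} [Category.{u} 𝒞] [HasLimits 𝒞] [HasColimits 𝒞]
  (F : DGS k S ⥤ 𝒞) (U : 𝒞 ⥤ DGS k S) (adj : F ⊣ U)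

/-! Since `δ (inl φ) = φ ≫ inr φ` in the mapping cone, the coboundary of `θ` is
`α ≫ inr ≫ η ≫ U g`. Transposing the commutative pushout square `ε_A ≫ j̄ = F inr ≫ g` across
the adjunction gives `inr ≫ η ≫ U g = U j̄`. When `d_M = 0`, the term `θ d` of the coboundary
vanishes, which leaves `d θ = α ≫ U j̄` degreewise. -/

namespace CategoryTheory.Adjunction

variable {C D : Type*} [Category C] [Category D] {L : C ⥤ D} {R : D ⥤ C}

lemma comp_unit_app_comp_map_eq_map (adj : L ⊣ R) {A B : D} {X : C} {i : R.obj A ⟶ X}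
    {j : A ⟶ B} {g : L.obj X ⟶ B} (w : adj.counit.app A ≫ j = L.map i ≫ g) :
    i ≫ adj.unit.app X ≫ R.map g = R.map j := by
  rw [← adj.homEquiv_unit, ← adj.homEquiv_naturality_left, ← w,
    adj.homEquiv_naturality_right, adj.homEquiv_unit, adj.right_triangle_components,
    Category.id_comp]

end CategoryTheory.Adjunction

namespace CochainComplex

variable {V : Type*} [Category V] [Preadditive V] {K L B : CochainComplex V ℤ}

lemma mappingCone.δ_inl_comp_ofHom_s2 (φ : K ⟶ L) [HomologicalComplex.HasHomotopyCofiber φ]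
    (f : mappingCone φ ⟶ B) :
    δ (-1) 0 ((inl φ).comp (Cochain.ofHom f) (add_zero (-1))) =
      Cochain.ofHom (φ ≫ inr φ ≫ f) := by
  rw [δ_comp_ofHom, δ_inl, ← Cochain.ofHom_comp, Category.assoc]

lemma HomComplex.Cochain.ofHom_f_eq_of_δ_eq_of_d_eq_zero {β : K ⟶ B} {h : Cochain K B (-1)}
    (hδ : δ (-1) 0 h = Cochain.ofHom β) (hK : ∀ p q, K.d p q = 0) (n : ℤ) :
    β.f n = h.v n (n - 1) (sub_eq_add_neg n 1).symm ≫ B.d (n - 1) n := by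
  have := Cochain.congr_v hδ n n (add_zero n)
  rw [δ_v (-1) 0 (neg_add_cancel 1) _ n n (add_zero n) (n - 1) (n + 1) rfl rfl, hK,
    zero_comp, smul_zero, add_zero, Cochain.ofHom_v] at this
  exact this.symm

end CochainComplex

section
variable {M : DGS k S} {A : 𝒞} (α : M ⟶ U.obj A) {D : 𝒞} (jbar : A ⟶ D)
  (g : F.obj (DGS.coneFun α) ⟶ D)

/-- Corollary: the chain map `α ≫ U j̄ : M ⟶ U(A⟨M,α⟩)` is null-homotopic, with
null-homotopy `θ`; in particular, if `d_M = 0` then for every `m ∈ M` the cycle `α(m)` is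
sent by `U j̄` to the boundary of `θ(m)`. -/
theorem alpha_comp_jbar_nullHomotopic
    (hpo : IsPushout (adj.counit.app A) (F.map (DGS.coneInr α)) jbar g) :
    DGS.IsNullHomotopy (α ≫ U.map jbar) (theta F U adj α g) ∧
    ((∀ (x : S) (n m : ℤ), (M x).d n m = 0) →
      ∀ (x : S) (n : ℤ) (m : (M x).X n),
        ((U.map jbar) x).f n ((α x).f n m) =
          ((U.obj D) x).d (n - 1) n
            ((theta F U adj α g x).v n (n - 1) (by omega) m)) := by
  have hjbar := adj.comp_unit_app_comp_map_eq_map hpo.w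
  have hθ : DGS.IsNullHomotopy (α ≫ U.map jbar) (theta F U adj α g) := fun x => by
    refine (mappingCone.δ_inl_comp_ofHom_s2 (α x) ((adj.unit.app _ ≫ U.map g) x)).trans ?_
    rw [← hjbar]
    rfl
  refine ⟨hθ, fun hM x n m => ?_⟩
  change ((α ≫ U.map jbar) x).f n m = _
  rw [Cochain.ofHom_f_eq_of_δ_eq_of_d_eq_zero (hθ x) (hM x) n]
  rfl

end
end
end

section
/- For every n ∈ ℤ and every pair of elements u ∈ U^{n+1}, v ∈ V^n such that d u = 0 and g(u) = d v, there exists an element w ∈ U^n with d w = u and g(w) = v. -/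
/-!
Since `g` is surjective, `0 ⟶ ker g ⟶ U ⟶ V ⟶ 0` is a short exact sequence of complexes,
and the long exact homology sequence shows that `ker g` is acyclic because `g` is a
quasi-isomorphism. Lift `v` to any `w₁ ∈ U^n`; then `u - d w₁` is a cycle of `ker g`, hence
`u - d w₁ = d b` with `b ∈ (ker g)^n`, and `w = w₁ + b` works.
-/

open CategoryTheory

namespace HomologicalComplex

variable {R : Type*} [Ring R] {ι : Type*} {c : ComplexShape ι}

lemma Hom.comm_apply {K L : HomologicalComplex (ModuleCat R) c} (φ : K ⟶ L) (i j : ι)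
    (x : K.X i) : φ.f j (K.d i j x) = L.d i j (φ.f i x) := by
  rw [← ConcreteCategory.comp_apply, ← φ.comm, ConcreteCategory.comp_apply]

lemma d_comp_d_apply (K : HomologicalComplex (ModuleCat R) c) (i j k : ι) (x : K.X i) :
    K.d j k (K.d i j x) = 0 := by
  simp [← ConcreteCategory.comp_apply]

lemma ExactAt.exists_d_eq {K : HomologicalComplex (ModuleCat R) c} {i j k : ι}
    (h : K.ExactAt j) (hi : c.prev j = i) (hk : c.next j = k) (x : K.X j)
    (hx : K.d j k x = 0) : ∃ y : K.X i, K.d i j y = x :=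
  (ShortComplex.moduleCat_exact_iff _).1 ((K.exactAt_iff' i j k hi hk).1 h) x hx

end HomologicalComplex

namespace CategoryTheory.ShortComplex

lemma shortExact_kernelSequence {C : Type*} [Category* C] [Abelian C] {X Y : C} (f : X ⟶ Y)
    [Epi f] : (kernelSequence f).ShortExact where
  exact := kernelSequence_exact f
  epi_g := ‹Epi f›

open HomologicalComplex in
lemma ShortExact.exists_lift_of_exactAt {R : Type*} [Ring R] {ι : Type*} {c : ComplexShape ι}
    {S : ShortComplex (HomologicalComplex (ModuleCat R) c)} (hS : S.ShortExact) {i j k : ι}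
    (hi : c.prev j = i) (hk : c.next j = k) (h₁ : S.X₁.ExactAt j) (u : S.X₂.X j)
    (v : S.X₃.X i) (hu : S.X₂.d j k u = 0) (huv : S.g.f j u = S.X₃.d i j v) :
    ∃ w : S.X₂.X i, S.X₂.d i j w = u ∧ S.g.f i w = v := by
  have hS' (n : ι) := hS.map_of_exact (HomologicalComplex.eval _ c n)
  have hg : Function.Surjective (S.g.f i) := (hS' i).moduleCat_surjective_g
  have hf : Function.Injective (S.f.f k) := (hS' k).moduleCat_injective_f
  have hfg : ∀ x : S.X₂.X j, S.g.f j x = 0 → ∃ y : S.X₁.X j, S.f.f j y = x :=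
    (moduleCat_exact_iff _).1 (hS' j).exact
  obtain ⟨w₁, rfl⟩ := hg v
  obtain ⟨a, ha⟩ := hfg (u - S.X₂.d i j w₁) (by rw [map_sub, huv, Hom.comm_apply, sub_self])
  have ha_cycle : S.X₁.d j k a = 0 := hf (by
    rw [Hom.comm_apply, ha, map_sub, hu, d_comp_d_apply, sub_zero, map_zero])
  obtain ⟨b, rfl⟩ := h₁.exists_d_eq hi hk a ha_cycle
  refine ⟨w₁ + S.f.f i b, ?_, ?_⟩
  · rw [map_add, ← Hom.comm_apply, ha, add_sub_cancel]
  · rw [map_add, ← ConcreteCategory.comp_apply, ← comp_f, S.zero]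
    simp

end CategoryTheory.ShortComplex

/-- Lemma 2 (Hinich-type): if `g : U ⟶ V` is a surjective quasi-isomorphism of cochain
complexes of `k`-modules, then for every pair `(u, v)` with `u ∈ U^{n+1}`, `v ∈ V^n`,
`d u = 0` and `g u = d v`, there exists `w ∈ U^n` with `d w = u` and `g w = v`. -/
theorem surjective_quasiIso_lifting {k : Type*} [CommRing k]
    (U V : CochainComplex (ModuleCat k) ℤ) (g : U ⟶ V) [QuasiIso g]
    (hsurj : ∀ n : ℤ, Function.Surjective (g.f n)) :
    ∀ (n : ℤ) (u : U.X (n + 1)) (v : V.X n),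
      U.d (n + 1) (n + 2) u = 0 → g.f (n + 1) u = V.d n (n + 1) v →
      ∃ w : U.X n, U.d n (n + 1) w = u ∧ g.f n w = v := by
  have : Epi g :=
    HomologicalComplex.epi_of_epi_f g fun n ↦ (ModuleCat.epi_iff_surjective _).2 (hsurj n)
  have hS := ShortComplex.shortExact_kernelSequence g
  intro n u v hu huv
  exact hS.exists_lift_of_exactAt (by simp) (by simp; ring) (hS.acyclic_X₁ ‹_› (n + 1))
    u v hu huv
end

section
/- Suppose M consists of free modules with zero differential. Then for every chain map α : M ⟶ U A, the morphism j̄ : A ⟶ A⟨M,α⟩ has the left lifting property with respect to every morphism y of 𝒞 such that, for every x ∈ S, (U y)(x) is surjective in every degree and is a quasi-isomorphism; i.e. every commutative square in 𝒞 with left edge j̄ and right edge such a y admits a diagonal filler. -/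
/-!
Since `F ⊣ U`, lifting `F.map (coneInr α)` against `y` is the same as lifting `coneInr α`
against `U y`, and left lifting properties are stable under pushout; so it suffices to lift
`inr : N ⟶ cone(α)` against a degreewise surjective quasi-isomorphism `p : P ⟶ Q`, one
component at a time. A map out of the cone is a pair `(t, u)` with `δ t = α ≫ u`, so we need
a degree `-1` cochain `t : M ⟶ P` with `δ t = α ≫ u` lifting the given `σ : M ⟶ Q`. Because
`M` has zero differential and projective terms, it is enough to solve this for single
elements: given a cycle `c` of `P` and `s` in `Q` with `d s = p c`, find `w` with `d w = c`
and `p w = s`. After lifting `s` to `P` this asks that `ker p` be acyclic, which follows from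
the long exact homology sequence of `0 ⟶ ker p ⟶ P ⟶ Q ⟶ 0`.
-/

open CategoryTheory CategoryTheory.Limits CochainComplex CochainComplex.HomComplex

noncomputable section

universe u

variable {k : Type u} [CommRing k] {S : Type u}

variable {𝒞 : Type (u + 1)} [Category.{u} 𝒞] [HasLimits 𝒞] [HasColimits 𝒞]
  (F : DGS k S ⥤ 𝒞) (U : 𝒞 ⥤ DGS k S) (adj : F ⊣ U)

namespace CategoryTheory

lemma ShortComplex.shortExact_kernel {C : Type*} [Category C] [Abelian C] {X Y : C}
    (p : X ⟶ Y) [Epi p] : (ShortComplex.mk (kernel.ι p) p (kernel.condition p)).ShortExact :=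
  { exact := ShortComplex.exact_of_f_is_kernel _ (kernelIsKernel p) }

lemma Pi.hasLiftingProperty {I : Type*} {C : I → Type*} [∀ j, Category (C j)]
    {A B X Y : ∀ j, C j} (i : A ⟶ B) (p : X ⟶ Y) (h : ∀ j, HasLiftingProperty (i j) (p j)) :
    HasLiftingProperty i p where
  sq_hasLift sq :=
    ⟨⟨⟨fun j => (CommSq.mk (congrFun sq.w j)).lift, funext fun _ => CommSq.fac_left _,
      funext fun _ => CommSq.fac_right _⟩⟩⟩

end CategoryTheory

theorem Module.Projective.exists_comp_eq_of_range_le {R : Type*} [Ring R] {P M N : Type*}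
    [AddCommGroup P] [Module R P] [AddCommGroup M] [Module R M] [AddCommGroup N] [Module R N]
    [Module.Projective R P] (f : P →ₗ[R] N) (g : M →ₗ[R] N)
    (h : LinearMap.range f ≤ LinearMap.range g) : ∃ τ : P →ₗ[R] M, g ∘ₗ τ = f := by
  obtain ⟨τ, hτ⟩ := Module.projective_lifting_property g.rangeRestrict
    (f.codRestrict _ fun x => h (LinearMap.mem_range_self f x)) g.surjective_rangeRestrict
  refine ⟨τ, LinearMap.ext fun x => ?_⟩
  simpa using congrArg Subtype.val (LinearMap.congr_fun hτ x)

namespace CochainComplex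

variable {R : Type*} [Ring R] {M N P Q : CochainComplex (ModuleCat.{v} R) ℤ}

lemma hom_comm_apply (φ : P ⟶ Q) (i j : ℤ) (x : P.X i) :
    Q.d i j (φ.f i x) = φ.f j (P.d i j x) :=
  ConcreteCategory.congr_hom (φ.comm i j) x

lemma exists_d_eq_of_acyclic (hP : P.Acyclic) {i j k : ℤ} (hij : i + 1 = j) (hjk : j + 1 = k)
    (x : P.X j) (hx : P.d j k x = 0) : ∃ y : P.X i, P.d i j y = x := by
  have hPj := hP j
  rw [HomologicalComplex.exactAt_iff' _ i j k (by simp; omega) (by simp; omega),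
    ShortComplex.moduleCat_exact_iff] at hPj
  exact hPj x hx

lemma exists_kernel_ι_f_apply_eq (p : P ⟶ Q) [Epi p] (n : ℤ) (x : P.X n) (hx : p.f n x = 0) :
    ∃ y : (kernel p).X n, (kernel.ι p).f n y = x :=
  (ShortComplex.moduleCat_exact_iff _).1 ((ShortComplex.shortExact_kernel p).map_of_exact
    (HomologicalComplex.eval _ _ n)).exact x hx

/-- Elementwise form of the acyclicity of the kernel of an epimorphic quasi-isomorphism. -/
lemma exists_d_eq_of_map_eq_zero (p : P ⟶ Q) [Epi p] [QuasiIso p] {i j k : ℤ} (hij : i + 1 = j)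
    (hjk : j + 1 = k) (x : P.X j) (hx : P.d j k x = 0) (hpx : p.f j x = 0) :
    ∃ y : P.X i, P.d i j y = x ∧ p.f i y = 0 := by
  obtain ⟨x, rfl⟩ := exists_kernel_ι_f_apply_eq p j x hpx
  have hdx : (kernel p).d j k x = 0 := by
    apply (ModuleCat.mono_iff_injective ((kernel.ι p).f k)).1 inferInstance
    rw [map_zero, ← hom_comm_apply, hx]
  obtain ⟨y, rfl⟩ := exists_d_eq_of_acyclic
    ((ShortComplex.shortExact_kernel p).acyclic_X₁ inferInstance) hij hjk x hdx
  refine ⟨(kernel.ι p).f i y, hom_comm_apply _ _ _ _, ?_⟩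
  rw [← ConcreteCategory.comp_apply, ← HomologicalComplex.comp_f, kernel.condition]
  rfl

lemma exists_d_eq_and_map_eq (p : P ⟶ Q) (hp : ∀ n, Function.Surjective (p.f n)) [QuasiIso p]
    {i j k : ℤ} (hij : i + 1 = j) (hjk : j + 1 = k) (c : P.X j) (hc : P.d j k c = 0)
    (s : Q.X i) (hs : Q.d i j s = p.f j c) : ∃ w : P.X i, P.d i j w = c ∧ p.f i w = s := by
  have : Epi p :=
    HomologicalComplex.epi_of_epi_f p fun n => (ModuleCat.epi_iff_surjective _).2 (hp n)
  obtain ⟨s, rfl⟩ := hp i s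
  obtain ⟨y, hy, hpy⟩ := exists_d_eq_of_map_eq_zero p hij hjk (c - P.d i j s)
    (by simp [hc, ← ConcreteCategory.comp_apply]) (by simp [← hs, hom_comm_apply])
  exact ⟨s + y, by simp [hy], by simp [hpy]⟩

lemma δ_v_of_d_eq_zero (hM : ∀ i j, M.d i j = 0) (t : Cochain M P (-1)) (i j : ℤ)
    (hij : i + (-1) = j) : (δ (-1) 0 t).v i i (add_zero i) = t.v i j hij ≫ P.d j i := by
  rw [δ_v (-1) 0 (neg_add_cancel 1) t i i (add_zero i) j (i + 1) (by omega) rfl, hM]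
  simp

lemma exists_cochain_lift (hM : ∀ i j, M.d i j = 0) (hproj : ∀ n, Module.Projective R (M.X n))
    (p : P ⟶ Q) (hp : ∀ n, Function.Surjective (p.f n)) [QuasiIso p]
    (f : M ⟶ P) (σ : Cochain M Q (-1)) (hσ : δ (-1) 0 σ = Cochain.ofHom (f ≫ p)) :
    ∃ t : Cochain M P (-1), δ (-1) 0 t = Cochain.ofHom f ∧
      t.comp (Cochain.ofHom p) (add_zero _) = σ := by
  have hτ (i j : ℤ) (hij : i + (-1) = j) : ∃ τ : M.X i ⟶ P.X j,
      τ ≫ P.d j i = f.f i ∧ τ ≫ p.f j = σ.v i j hij := by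
    have hrange : LinearMap.range ((f.f i).hom.prod (σ.v i j hij).hom) ≤
        LinearMap.range ((P.d j i).hom.prod (p.f j).hom) := by
      rintro _ ⟨m, rfl⟩
      have hc : P.d i (i + 1) (f.f i m) = 0 := by simp [hom_comm_apply, hM]
      have hs : Q.d j i (σ.v i j hij m) = p.f i (f.f i m) := by
        have := Cochain.congr_v hσ i i (add_zero i)
        rw [δ_v_of_d_eq_zero hM σ i j hij] at this
        simpa using ConcreteCategory.congr_hom this m
      obtain ⟨w, hw⟩ := exists_d_eq_and_map_eq p hp (by omega) rfl (f.f i m) hc _ hs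
      exact ⟨w, Prod.ext hw.1 hw.2⟩
    obtain ⟨τ, hτ⟩ := Module.Projective.exists_comp_eq_of_range_le _ _ hrange
    refine ⟨ModuleCat.ofHom τ, ?_, ?_⟩ <;> ext m
    · exact congrArg Prod.fst (LinearMap.congr_fun hτ m)
    · exact congrArg Prod.snd (LinearMap.congr_fun hτ m)
  choose τ hτd hτp using hτ
  refine ⟨Cochain.mk τ, ?_, ?_⟩
  · ext i : 1
    rw [δ_v_of_d_eq_zero hM _ i (i - 1) (by omega), Cochain.mk_v, hτd, Cochain.ofHom_v]
  · ext i j hij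
    simp [hτp]

theorem hasLiftingProperty_mappingCone_inr (hM : ∀ i j, M.d i j = 0)
    (hproj : ∀ n, Module.Projective R (M.X n)) (α : M ⟶ N) (p : P ⟶ Q)
    (hp : ∀ n, Function.Surjective (p.f n)) [QuasiIso p] :
    HasLiftingProperty (mappingCone.inr α) p where
  sq_hasLift {u v} sq := by
    have hσ : δ (-1) 0 ((mappingCone.inl α).comp (Cochain.ofHom v) (add_zero _)) =
        Cochain.ofHom ((α ≫ u) ≫ p) := by
      rw [δ_comp_ofHom, mappingCone.δ_inl, ← Cochain.ofHom_comp, Category.assoc, ← sq.w,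
        Category.assoc]
    obtain ⟨t, ht, htp⟩ := exists_cochain_lift hM hproj p hp (α ≫ u) _ hσ
    refine ⟨⟨⟨mappingCone.desc α t u ht, mappingCone.inr_desc _ _ _ _, ?_⟩⟩⟩
    apply Cochain.ofHom_injective
    rw [mappingCone.ext_cochain_from_iff α (-1) 0 (neg_add_cancel 1)]
    constructor
    · rw [Cochain.ofHom_comp, ← Cochain.comp_assoc_of_third_is_zero_cochain,
        mappingCone.inl_desc, htp]
    · rw [← Cochain.ofHom_comp, ← Cochain.ofHom_comp, mappingCone.inr_desc_assoc, sq.w]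

end CochainComplex

section
variable {M : DGS k S} {A : 𝒞} (α : M ⟶ U.obj A) {D : 𝒞} (jbar : A ⟶ D)
  (g : F.obj (DGS.coneFun α) ⟶ D)

/-- If `M` consists of free modules with zero differential, then
`j̄ : A ⟶ A⟨M,α⟩` has the left lifting property with respect to every morphism `y`
such that `U y` is componentwise a degreewise surjection and a quasi-isomorphism. -/
theorem jbar_hasLeftLiftingProperty (hfree : DGS.IsFree M)
    (hpo : IsPushout (adj.counit.app A) (F.map (DGS.coneInr α)) jbar g) :
    ∀ ⦃P Q : 𝒞⦄ (y : P ⟶ Q),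
      (∀ (x : S) (n : ℤ), Function.Surjective (((U.map y) x).f n)) →
      (∀ x : S, QuasiIso ((U.map y) x)) →
      HasLiftingProperty jbar y := by
  intro P Q y hfib hqis
  have hcone (x : S) : HasLiftingProperty (DGS.coneInr α x) ((U.map y) x) :=
    have := hqis x
    CochainComplex.hasLiftingProperty_mappingCone_inr (hfree.1 x)
      (fun n => have := hfree.2 x n; inferInstance) (α x) _ (hfib x)
  have : HasLiftingProperty (F.map (DGS.coneInr α)) y :=
    (adj.hasLiftingProperty_iff _ _).2 (Pi.hasLiftingProperty _ _ hcone)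
  exact hpo.hasLiftingProperty y

end
end
end
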